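/- Let G be a finite abelian group with |G| > 2, exp(G) = n, and r(G) ≤ n − 1, and let G₀ ⊆ G be a subset with Δ(G₀) ≠ ∅ and min Δ(G₀) = max Δ*(G). Then G₀ is minimal non-half-factorial and not an LCN-set if and only if G₀ = {g, −g} for some g ∈ G with ord(g) = n. -/

import Mathlib

open Multiset

section Defs

variable {G : Type*} [AddCommGroup G]

/-- `S` is a zero-sum sequence over `G₀`: a multiset with entries in `G₀` and sum `0`. -/
def IsZeroSumSeq (G₀ : Set G) (S : Multiset G) : Prop :=
  (∀ x ∈ S, x ∈ G₀) ∧ S.sum = 0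

/-- `S` is an atom over `G₀`: a nonempty zero-sum sequence over `G₀` that is not the
union of two nonempty zero-sum sequences over `G₀`. -/
def IsAtomSeq (G₀ : Set G) (S : Multiset G) : Prop :=
  IsZeroSumSeq G₀ S ∧ S ≠ 0 ∧
    ∀ A B : Multiset G, IsZeroSumSeq G₀ A → IsZeroSumSeq G₀ B →
      A ≠ 0 → B ≠ 0 → S ≠ A + B

/-- The set of lengths of `B`: all `k` such that `B` is a union of `k` atoms over `G₀`. -/
def LengthSet (G₀ : Set G) (B : Multiset G) : Set ℕ :=
  {k | ∃ l : Multiset (Multiset G), Multiset.card l = k ∧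
      (∀ A ∈ l, IsAtomSeq G₀ A) ∧ l.sum = B}

/-- The set of successive distances of a set of naturals. -/
def DeltaOf (L : Set ℕ) : Set ℕ :=
  {d | ∃ x ∈ L, ∃ y ∈ L, x < y ∧ y - x = d ∧ ∀ z ∈ L, ¬(x < z ∧ z < y)}

/-- The set of distances `Δ(G₀)`. -/
def DeltaSet (G₀ : Set G) : Set ℕ :=
  {d | ∃ B : Multiset G, IsZeroSumSeq G₀ B ∧ B ≠ 0 ∧ d ∈ DeltaOf (LengthSet G₀ B)}

/-- `G₀` is half-factorial if `Δ(G₀) = ∅`. -/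
def IsHalfFactorialSet (G₀ : Set G) : Prop := DeltaSet G₀ = ∅

/-- `G₀` is minimal non-half-factorial if `Δ(G₀) ≠ ∅` and every proper subset is
half-factorial. -/
def IsMinNonHalfFactorial (G₀ : Set G) : Prop :=
  (DeltaSet G₀).Nonempty ∧ ∀ G₁ : Set G, G₁ ⊂ G₀ → DeltaSet G₁ = ∅

/-- The cross number `k(S) = Σ 1/ord(g)` of a multiset over `G`. -/
noncomputable def crossNumber (S : Multiset G) : ℚ :=
  (S.map (fun g => ((addOrderOf g : ℚ))⁻¹)).sum

/-- `G₀` is an LCN-set if every atom over `G₀` has cross number at least 1. -/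
def IsLCNSet (G₀ : Set G) : Prop :=
  ∀ U : Multiset G, IsAtomSeq G₀ U → 1 ≤ crossNumber U

/-- A subset of `G \ {0}` is independent if any integral linear relation on its elements
has all summands zero. -/
def IsIndependentSet (E : Set G) : Prop :=
  (0 : G) ∉ E ∧ ∀ s : Finset G, ↑s ⊆ E → ∀ f : G → ℤ,
    (∑ e ∈ s, f e • e) = 0 → ∀ e ∈ s, f e • e = 0

/-- `d` is a greatest common divisor of the set `S` of naturals. -/
def IsSetGcd (S : Set ℕ) (d : ℕ) : Prop :=
  (∀ s ∈ S, d ∣ s) ∧ ∀ e : ℕ, (∀ s ∈ S, e ∣ s) → e ∣ d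

end Defs

/-- The set of minimal distances `Δ*(G)`. -/
def DeltaStar (G : Type*) [AddCommGroup G] : Set ℕ :=
  {d | ∃ G₀ : Set G, (DeltaSet G₀).Nonempty ∧ d = sInf (DeltaSet G₀)}

/-- The `p`-rank of a finite abelian group: `log_p` of the order of the `p`-torsion
subgroup `{x | p • x = 0}`. -/
noncomputable def pRank (G : Type*) [AddCommGroup G] (p : ℕ) : ℕ :=
  Nat.log p (Nat.card {x : G // p • x = 0})

/-- The rank of a finite abelian group: the maximum of the `p`-ranks over all primes. -/
noncomputable def rankG (G : Type*) [AddCommGroup G] : ℕ :=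
  sSup {r : ℕ | ∃ p : ℕ, p.Prime ∧ r = pRank G p}

/-!
For `ord g = n ≥ 3` the atoms over `{g, -g}` are `gⁿ`, `(-g)ⁿ` and `g(-g)`; comparing the
multiplicities of `g` and `-g` shows that any two factorization lengths of one sequence are
congruent mod `n - 2`, while `gⁿ(-g)ⁿ` has the lengths `2` and `n`. So `min Δ({g, -g}) = n - 2`,
and `max Δ*(G) ≥ exp(G) - 2`, where `exp(G) ≥ 3` by the rank bound.

If `U` is an atom over `G₀` with `k(U) < 1`, then `Uⁿ` (with `n = exp(G)`) factors both into `n`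
copies of `U` and into the atoms `x^ord(x)`, `x ∈ U`, giving the lengths `n` and `n k(U) < n`.
Hence `n - 2 ≤ min Δ(G₀) ≤ n - n k(U)`, so `n k(U) ≤ 2`, which forces `U = g(-g)` with
`ord g = n`; minimality then gives `G₀ = {g, -g}`. Conversely the proper subsets of `{g, -g}` are
half-factorial, all their atoms having the same length, and `k(g(-g)) = 2/n < 1`.
-/

lemma card_sum_of_forall_card_eq {α : Type*} {l : Multiset (Multiset α)} {c : ℕ}
    (hl : ∀ A ∈ l, card A = c) : Multiset.card l.sum = Multiset.card l * c := by
  rw [← Multiset.join, card_join, map_congr rfl hl, map_const', sum_replicate, smul_eq_mul]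

section Atoms

open Multiset

variable {G : Type*} [AddCommGroup G] {G₀ : Set G}

lemma isAtomSeq_iff {S : Multiset G} :
    IsAtomSeq G₀ S ↔
      IsZeroSumSeq G₀ S ∧ S ≠ 0 ∧ ∀ T ≤ S, T ≠ 0 → T.sum = 0 → T = S := by
  refine and_congr_right fun hS => and_congr_right fun _ => ⟨fun h T hTS hT0 hT => ?_, ?_⟩
  · obtain ⟨R, rfl⟩ := Multiset.le_iff_exists_add.1 hTS
    by_contra hne
    refine h T R ⟨fun x hx => hS.1 x (mem_add.2 (Or.inl hx)), hT⟩
      ⟨fun x hx => hS.1 x (mem_add.2 (Or.inr hx)), ?_⟩ hT0 ?_ rfl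
    · simpa [hT] using hS.2
    · rintro rfl
      exact hne (add_zero T).symm
  · rintro h A B hA - hA0 hB0 rfl
    exact hB0 (by simpa using h A (le_add_right A B) hA0 hA.2)

lemma IsAtomSeq.eq_of_le {S T : Multiset G} (hS : IsAtomSeq G₀ S) (hTS : T ≤ S) (hT0 : T ≠ 0)
    (hT : T.sum = 0) : T = S :=
  (isAtomSeq_iff.1 hS).2.2 T hTS hT0 hT

lemma isAtomSeq_replicate_addOrderOf {h : G} (hh : h ∈ G₀) (hpos : 0 < addOrderOf h) :
    IsAtomSeq G₀ (replicate (addOrderOf h) h) := by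
  refine isAtomSeq_iff.2 ⟨⟨fun x hx => eq_of_mem_replicate hx ▸ hh, by simp⟩,
    card_pos.1 (by rw [card_replicate]; exact hpos), fun T hT hT0 hTsum => ?_⟩
  obtain ⟨k, hk, rfl⟩ := le_replicate_iff.1 hT
  have hk0 : k ≠ 0 := by rintro rfl; exact hT0 (replicate_zero h)
  have := Nat.le_of_dvd (Nat.pos_of_ne_zero hk0)
    (addOrderOf_dvd_of_nsmul_eq_zero (by simpa using hTsum))
  rw [le_antisymm hk this]

lemma IsAtomSeq.eq_replicate_of_forall_eq {S : Multiset G} {h : G} (hS : IsAtomSeq G₀ S)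
    (hSh : ∀ x ∈ S, x = h) : S = replicate (addOrderOf h) h := by
  have hrep : S = replicate (card S) h := eq_replicate_card.2 hSh
  have hpos : 0 < card S := card_pos.2 hS.2.1
  have hdvd : addOrderOf h ∣ card S :=
    addOrderOf_dvd_of_nsmul_eq_zero (by rw [← sum_replicate, ← hrep]; exact hS.1.2)
  refine (hS.eq_of_le ?_ ?_ (by simp)).symm
  · rw [hrep]
    exact (replicate_le_replicate h).2 (Nat.le_of_dvd hpos hdvd)
  · exact card_pos.1 (by rw [card_replicate]; exact Nat.pos_of_dvd_of_pos hdvd hpos)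

lemma isAtomSeq_pair {g : G} (hg : g ∈ G₀) (hg' : -g ∈ G₀) (h0 : g ≠ 0) :
    IsAtomSeq G₀ {g, -g} := by
  refine isAtomSeq_iff.2 ⟨⟨by simp [hg, hg'], by simp⟩, by simp, fun T hT hT0 hTsum => ?_⟩
  by_contra hne
  have hcard : card T = 1 := by
    have h2 : card T < 2 := by simpa using card_lt_card (lt_of_le_of_ne hT hne)
    have := card_pos.2 hT0
    omega
  obtain ⟨x, rfl⟩ := card_eq_one.1 hcard
  have hx : x = 0 := by simpa using hTsum
  have hxmem : x ∈ ({g, -g} : Multiset G) := singleton_le.1 hT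
  simp [hx, eq_comm, h0] at hxmem

end Atoms

section Distances

lemma pos_of_mem_deltaOf {L : Set ℕ} {d : ℕ} (hd : d ∈ DeltaOf L) : 0 < d := by
  obtain ⟨x, -, y, -, hxy, rfl, -⟩ := hd
  omega

lemma exists_mem_deltaOf_le {L : Set ℕ} {a b : ℕ} (ha : a ∈ L) (hb : b ∈ L) (hab : a < b) :
    ∃ d ∈ DeltaOf L, d ≤ b - a := by
  have hT : ({z | z ∈ L ∧ a < z} : Set ℕ).Nonempty := ⟨b, hb, hab⟩
  set y := sInf {z | z ∈ L ∧ a < z}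
  obtain ⟨hyL, hay⟩ : y ∈ L ∧ a < y := Nat.sInf_mem hT
  have hyb : y ≤ b := Nat.sInf_le ⟨hb, hab⟩
  refine ⟨y - a, ⟨a, ha, y, hyL, hay, rfl, fun z hz hzy => ?_⟩, by omega⟩
  exact (Nat.sInf_le ⟨hz, hzy.1⟩ : y ≤ z).not_gt hzy.2

variable {q : ℕ} {L : Set ℕ}

lemma le_of_mem_deltaOf_of_modEq (hL : ∀ x ∈ L, ∀ y ∈ L, x ≡ y [MOD q]) {d : ℕ}
    (hd : d ∈ DeltaOf L) : q ≤ d := by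
  obtain ⟨x, hx, y, hy, hxy, rfl, -⟩ := hd
  exact Nat.le_of_dvd (by omega) ((Nat.modEq_iff_dvd' hxy.le).1 (hL x hx y hy))

lemma mem_deltaOf_of_modEq (hL : ∀ x ∈ L, ∀ y ∈ L, x ≡ y [MOD q]) {a : ℕ} (ha : a ∈ L)
    (hb : a + q ∈ L) (hq : 0 < q) : q ∈ DeltaOf L := by
  refine ⟨a, ha, a + q, hb, by omega, by omega, fun z hz ⟨haz, hzb⟩ => ?_⟩
  have := Nat.le_of_dvd (by omega) ((Nat.modEq_iff_dvd' haz.le).1 (hL a ha z hz))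
  omega

end Distances

section Lengths

open Multiset

variable {G : Type*} [AddCommGroup G] {G₀ G₁ : Set G}

lemma sInf_deltaSet_le_sub {B : Multiset G} (hB : IsZeroSumSeq G₀ B) (hB0 : B ≠ 0) {a b : ℕ}
    (ha : a ∈ LengthSet G₀ B) (hb : b ∈ LengthSet G₀ B) (hab : a < b) :
    sInf (DeltaSet G₀) ≤ b - a := by
  obtain ⟨d, hd, hdle⟩ := exists_mem_deltaOf_le ha hb hab
  exact (Nat.sInf_le (show d ∈ DeltaSet G₀ from ⟨B, hB, hB0, hd⟩)).trans hdle

lemma mem_lengthSet_nsmul {U : Multiset G} (hU : IsAtomSeq G₀ U) (k : ℕ) :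
    k ∈ LengthSet G₀ (k • U) :=
  ⟨replicate k U, card_replicate k U, fun _ hA => eq_of_mem_replicate hA ▸ hU, sum_replicate k U⟩

lemma deltaSet_eq_empty_of_forall_card_eq {c : ℕ}
    (hc : ∀ A, IsAtomSeq G₀ A → card A = c) : DeltaSet G₀ = ∅ := by
  refine Set.eq_empty_of_forall_notMem ?_
  rintro d ⟨B, -, -, x, ⟨lx, rfl, hlx, hx⟩, y, ⟨ly, rfl, hly, hy⟩, hxy, -⟩
  obtain ⟨A, hA⟩ := card_pos_iff_exists_mem.1 (by omega : 0 < card ly)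
  have hcpos : 0 < c := hc A (hly A hA) ▸ card_pos.2 (hly A hA).2.1
  have hcx := card_sum_of_forall_card_eq fun A hA => hc A (hlx A hA)
  have hcy := card_sum_of_forall_card_eq fun A hA => hc A (hly A hA)
  rw [hx] at hcx
  rw [hy, hcx] at hcy
  exact hxy.ne (Nat.eq_of_mul_eq_mul_right hcpos hcy)

lemma deltaSet_eq_empty_of_subset_singleton {h : G} (hsub : G₀ ⊆ {h}) : DeltaSet G₀ = ∅ :=
  deltaSet_eq_empty_of_forall_card_eq (c := addOrderOf h) fun A hA => by
    rw [hA.eq_replicate_of_forall_eq fun x hx => hsub (hA.1.1 x hx), card_replicate]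

lemma isMinNonHalfFactorial_pair {a b : G} (h : (DeltaSet {a, b}).Nonempty) :
    IsMinNonHalfFactorial {a, b} := by
  refine ⟨h, fun G₁ hG₁ => ?_⟩
  obtain ⟨x, hx, hxG₁⟩ := Set.exists_of_ssubset hG₁
  obtain rfl | rfl := hx
  · exact deltaSet_eq_empty_of_subset_singleton
      ((Set.subset_sdiff_singleton hG₁.1 hxG₁).trans (Set.sdiff_singleton_subset_iff.2 subset_rfl))
  · exact deltaSet_eq_empty_of_subset_singleton
      ((Set.subset_sdiff_singleton hG₁.1 hxG₁).trans
        (Set.sdiff_singleton_subset_iff.2 (Set.pair_comm _ _).subset))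

lemma IsMinNonHalfFactorial.eq_of_subset (hG₀ : IsMinNonHalfFactorial G₀) (hsub : G₁ ⊆ G₀)
    (hG₁ : (DeltaSet G₁).Nonempty) : G₁ = G₀ := by
  by_contra hne
  simp [hG₀.2 G₁ (ssubset_of_subset_of_ne hsub hne)] at hG₁

end Lengths

section Pair

open Multiset

variable {G : Type*} [AddCommGroup G] {g : G}

lemma ne_neg_of_two_lt_addOrderOf (hg : 2 < addOrderOf g) : g ≠ -g := by
  intro h
  have := Nat.le_of_dvd two_pos
    (addOrderOf_dvd_of_nsmul_eq_zero (x := g) (by rw [two_nsmul]; nth_rw 2 [h]; simp))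
  omega

lemma IsAtomSeq.eq_replicate_or_eq_pair {S : Multiset G} (hS : IsAtomSeq {g, -g} S) :
    S = replicate (addOrderOf g) g ∨ S = replicate (addOrderOf g) (-g) ∨ S = {g, -g} := by
  have hmem : ∀ x ∈ S, x = g ∨ x = -g := fun x hx => hS.1.1 x hx
  by_cases hSg : ∀ x ∈ S, x = g
  · exact Or.inl (hS.eq_replicate_of_forall_eq hSg)
  by_cases hSg' : ∀ x ∈ S, x = -g
  · exact Or.inr (Or.inl (addOrderOf_neg g ▸ hS.eq_replicate_of_forall_eq hSg'))
  push Not at hSg hSg'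
  obtain ⟨x, hx, hxg⟩ := hSg
  obtain ⟨y, hy, hyg⟩ := hSg'
  have hx' : x = -g := (hmem x hx).resolve_left hxg
  have hy' : y = g := (hmem y hy).resolve_right hyg
  subst hx' hy'
  refine Or.inr (Or.inr (hS.eq_of_le ?_ (by simp) (by simp)).symm)
  exact (le_iff_subset (by simpa using hyg)).2 (by simp [cons_subset, hx, hy])

lemma exists_count_eq_of_forall_isAtomSeq_pair [DecidableEq G] (hg : g ≠ -g)
    {l : Multiset (Multiset G)} (hl : ∀ A ∈ l, IsAtomSeq {g, -g} A) :
    ∃ t s p : ℕ, card l = t + s + p ∧ count g l.sum = t * addOrderOf g + p ∧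
      count (-g) l.sum = s * addOrderOf g + p := by
  induction l using Multiset.induction_on with
  | empty => exact ⟨0, 0, 0, by simp⟩
  | cons A l ih =>
    obtain ⟨t, s, p, hcard, hcg, hcg'⟩ :=
      ih fun B hB => hl B (mem_cons_of_mem hB)
    simp only [card_cons, sum_cons, count_add, hcard, hcg, hcg']
    rcases (hl A (mem_cons_self A l)).eq_replicate_or_eq_pair with rfl | rfl | rfl
    · refine ⟨t + 1, s, p, by ring, ?_, ?_⟩ <;>
        simp only [count_replicate, hg, if_true, if_false] <;> ring
    · refine ⟨t, s + 1, p, by ring, ?_, ?_⟩ <;>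
        simp only [count_replicate, hg.symm, if_true, if_false] <;> ring
    · refine ⟨t, s, p + 1, by ring, ?_, ?_⟩ <;>
        simp only [insert_eq_cons, count_cons_self, count_cons_of_ne hg.symm,
          count_singleton_self, count_singleton, hg, if_false] <;> ring

lemma modEq_of_mem_lengthSet_pair (hg : 2 < addOrderOf g) {B : Multiset G} {a b : ℕ}
    (ha : a ∈ LengthSet {g, -g} B) (hb : b ∈ LengthSet {g, -g} B) :
    a ≡ b [MOD addOrderOf g - 2] := by
  classical
  obtain ⟨la, rfl, hla, rfl⟩ := ha
  obtain ⟨lb, rfl, hlb, hsum⟩ := hb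
  have hgg := ne_neg_of_two_lt_addOrderOf hg
  obtain ⟨t, s, p, ha, hag, hag'⟩ := exists_count_eq_of_forall_isAtomSeq_pair hgg hla
  obtain ⟨t', s', p', hb, hbg, hbg'⟩ := exists_count_eq_of_forall_isAtomSeq_pair hgg hlb
  rw [hsum] at hbg hbg'
  set n := addOrderOf g
  -- the two counts give `t - t' = s - s'`, so the lengths differ by `(n - 2) (t - t')`
  have h1 : (t : ℤ) * n + p = t' * n + p' := by exact_mod_cast hag.symm.trans hbg
  have h2 : (s : ℤ) * n + p = s' * n + p' := by exact_mod_cast hag'.symm.trans hbg'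
  have hts : (t : ℤ) - t' = s - s' :=
    mul_right_cancel₀ (show (n : ℤ) ≠ 0 by omega) (by linear_combination h1 - h2)
  rw [Nat.modEq_iff_dvd, ha, hb]
  refine ⟨t - t', ?_⟩
  push_cast [show 2 ≤ n by omega]
  linear_combination -h1 + hts

lemma mem_deltaSet_pair (hg : 2 < addOrderOf g) :
    addOrderOf g - 2 ∈ DeltaSet ({g, -g} : Set G) := by
  set n := addOrderOf g
  have hmem : g ∈ ({g, -g} : Set G) ∧ -g ∈ ({g, -g} : Set G) := by simp
  have hpair : ({g, -g} : Multiset G) = {g} + {-g} := rfl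
  refine ⟨n • {g, -g}, ⟨?_, by simp [sum_nsmul]⟩, smul_ne_zero (by omega) (by simp), ?_⟩
  · intro x hx
    simpa using mem_of_mem_nsmul hx
  refine mem_deltaOf_of_modEq (fun x hx y hy => modEq_of_mem_lengthSet_pair hg hx hy)
    (a := 2) ?_ ?_ (by omega)
  · refine ⟨{replicate n g, replicate n (-g)}, rfl, ?_, ?_⟩
    · have hneg : 0 < addOrderOf (-g) := by rw [addOrderOf_neg]; omega
      simpa [n] using ⟨isAtomSeq_replicate_addOrderOf hmem.1 (by omega),
        addOrderOf_neg g ▸ isAtomSeq_replicate_addOrderOf hmem.2 hneg⟩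
    · simp only [hpair, nsmul_add, nsmul_singleton, insert_eq_cons, sum_cons, sum_singleton]
  · rw [show 2 + (n - 2) = n by omega]
    exact mem_lengthSet_nsmul (isAtomSeq_pair hmem.1 hmem.2 (by rintro rfl; simp [n] at hg)) n

lemma sInf_deltaSet_pair (hg : 2 < addOrderOf g) :
    sInf (DeltaSet ({g, -g} : Set G)) = addOrderOf g - 2 := by
  refine le_antisymm (Nat.sInf_le (mem_deltaSet_pair hg)) (le_csInf ⟨_, mem_deltaSet_pair hg⟩ ?_)
  rintro d ⟨B, -, -, hd⟩
  exact le_of_mem_deltaOf_of_modEq (fun x hx y hy => modEq_of_mem_lengthSet_pair hg hx hy) hd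

end Pair

section CrossNumber

open Multiset

noncomputable def scaledCrossNumber {G : Type*} [AddCommGroup G] (S : Multiset G) : ℕ :=
  (S.map fun x => AddMonoid.exponent G / addOrderOf x).sum

variable {G : Type*} [AddCommGroup G] [Finite G] {G₀ : Set G}

lemma cast_scaledCrossNumber (S : Multiset G) :
    (scaledCrossNumber S : ℚ) = AddMonoid.exponent G * crossNumber S := by
  rw [scaledCrossNumber, crossNumber, Nat.cast_multiset_sum, ← sum_map_mul_left, map_map]
  refine congrArg sum (map_congr rfl fun x _ => ?_)
  rw [Function.comp_apply, Nat.cast_div (AddMonoid.addOrder_dvd_exponent x)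
    (by exact_mod_cast (addOrderOf_pos x).ne'), div_eq_mul_inv]

lemma scaledCrossNumber_lt_exponent_iff {S : Multiset G} :
    scaledCrossNumber S < AddMonoid.exponent G ↔ crossNumber S < 1 := by
  have hpos : (0 : ℚ) < AddMonoid.exponent G :=
    Nat.cast_pos.2 (Nat.pos_of_ne_zero AddMonoid.exponent_ne_zero_of_finite)
  rw [← Nat.cast_lt (α := ℚ), cast_scaledCrossNumber, mul_lt_iff_lt_one_right hpos]

/-- Each `x ∈ S` contributes the atom `x ^ ord(x)`, `exp(G) / ord(x)` times. -/
lemma scaledCrossNumber_mem_lengthSet {S : Multiset G} (hS : ∀ x ∈ S, x ∈ G₀) :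
    scaledCrossNumber S ∈ LengthSet G₀ (AddMonoid.exponent G • S) := by
  refine ⟨S.bind fun x => replicate (AddMonoid.exponent G / addOrderOf x)
    (replicate (addOrderOf x) x), by simp [card_bind, scaledCrossNumber], ?_, ?_⟩
  · intro A hA
    obtain ⟨x, hx, hAx⟩ := mem_bind.1 hA
    rw [eq_of_mem_replicate hAx]
    exact isAtomSeq_replicate_addOrderOf (hS x hx) (addOrderOf_pos x)
  · rw [sum_bind]
    conv_rhs => rw [← sum_map_singleton S, ← sum_map_nsmul]
    refine congrArg sum (map_congr rfl fun x _ => ?_)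
    rw [sum_replicate, nsmul_replicate, nsmul_singleton,
      Nat.div_mul_cancel (AddMonoid.addOrder_dvd_exponent x)]

lemma sInf_deltaSet_le_exponent_sub {U : Multiset G} (hU : IsAtomSeq G₀ U)
    (hk : crossNumber U < 1) :
    sInf (DeltaSet G₀) ≤ AddMonoid.exponent G - scaledCrossNumber U := by
  have hn := AddMonoid.exponent_ne_zero_of_finite (G := G)
  refine sInf_deltaSet_le_sub ⟨fun x hx => hU.1.1 x (mem_of_mem_nsmul hx), ?_⟩ ?_
    (scaledCrossNumber_mem_lengthSet hU.1.1) (mem_lengthSet_nsmul hU _)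
    (scaledCrossNumber_lt_exponent_iff.2 hk)
  · rw [sum_nsmul, hU.1.2, smul_zero]
  · exact smul_ne_zero hn hU.2.1

end CrossNumber

section CrossNumberPair

open Multiset

variable {G : Type*} [AddCommGroup G]

lemma addOrderOf_eq_exponent_of_div_eq_one {x : G}
    (hx : AddMonoid.exponent G / addOrderOf x = 1) : addOrderOf x = AddMonoid.exponent G := by
  simpa [hx] using Nat.div_mul_cancel (AddMonoid.addOrder_dvd_exponent x)

lemma exists_eq_pair_of_scaledCrossNumber_le_two [Finite G] {U : Multiset G} (hU : U.sum = 0)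
    (hU0 : U ≠ 0) (hn : 2 < AddMonoid.exponent G) (h : scaledCrossNumber U ≤ 2) :
    ∃ u, addOrderOf u = AddMonoid.exponent G ∧ U = {u, -u} := by
  set n := AddMonoid.exponent G
  have hone (x : G) : 1 ≤ n / addOrderOf x :=
    Nat.div_pos (Nat.le_of_dvd (by omega) (AddMonoid.addOrder_dvd_exponent x)) (addOrderOf_pos x)
  have hcard : card U ≤ 2 := by
    have := (card_nsmul_le_sum (s := U.map fun x => n / addOrderOf x) (a := 1)
      (by simpa using fun x _ => hone x)).trans h
    rwa [card_map, smul_eq_mul, mul_one] at this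
  obtain ⟨u, v, rfl⟩ : ∃ u v, U = {u, v} := by
    have hpos := card_pos.2 hU0
    interval_cases hc : card U
    · obtain ⟨x, rfl⟩ := card_eq_one.1 hc
      obtain rfl : x = 0 := by simpa using hU
      have : n ≤ 2 := by simpa [scaledCrossNumber] using h
      omega
    · exact card_eq_two.1 hc
  have hsum : n / addOrderOf u + n / addOrderOf v ≤ 2 := by simpa [scaledCrossNumber] using h
  have hu : n / addOrderOf u = 1 := by have := hone u; have := hone v; omega
  refine ⟨u, addOrderOf_eq_exponent_of_div_eq_one hu, ?_⟩
  rw [eq_neg_of_add_eq_zero_right (by simpa using hU : u + v = 0)]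

end CrossNumberPair

section Rank

variable {G : Type*} [AddCommGroup G]

lemma pRank_le_rankG [Finite G] {p : ℕ} (hp : p.Prime) : pRank G p ≤ rankG G := by
  refine le_csSup ⟨Nat.log 2 (Nat.card G), ?_⟩ ⟨p, hp, rfl⟩
  rintro r ⟨q, hq, rfl⟩
  exact (Nat.log_mono_right (Finite.card_subtype_le _)).trans
    (Nat.log_anti_left one_lt_two hq.two_le)

lemma pRank_two_of_exponent_eq_two (h : AddMonoid.exponent G = 2) :
    pRank G 2 = Nat.log 2 (Nat.card G) := by
  rw [pRank, Nat.card_congr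
    (Equiv.subtypeUnivEquiv fun x => h ▸ AddMonoid.exponent_nsmul_eq_zero x)]

/-- An elementary abelian `2`-group of order `> 2` has rank `≥ 2`. -/
lemma two_lt_exponent [Finite G] (hG : 2 < Nat.card G)
    (hr : rankG G ≤ AddMonoid.exponent G - 1) : 2 < AddMonoid.exponent G := by
  have : Nontrivial G := Finite.one_lt_card_iff_nontrivial.1 (by omega)
  have h1 := AddMonoid.one_lt_exponent (G := G)
  by_contra! hle
  have h2 : AddMonoid.exponent G = 2 := by omega
  have hcard : 4 ≤ Nat.card G := by
    obtain ⟨k, hk⟩ := h2 ▸ AddGroup.exponent_dvd_nat_card (G := G)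
    omega
  have hlog : 2 ≤ Nat.log 2 (Nat.card G) :=
    (Nat.le_log_iff_pow_le one_lt_two (by omega)).2 hcard
  have := pRank_le_rankG (G := G) Nat.prime_two
  rw [pRank_two_of_exponent_eq_two h2] at this
  omega

end Rank

section MinimalDistance

variable {G : Type*} [AddCommGroup G]

lemma exponent_sub_two_mem_deltaStar [Finite G] (hn : 2 < AddMonoid.exponent G) :
    AddMonoid.exponent G - 2 ∈ DeltaStar G := by
  obtain ⟨g, hg⟩ := AddMonoid.exists_addOrderOf_eq_exponent (G := G) .of_finite
  exact ⟨{g, -g}, ⟨_, mem_deltaSet_pair (hg ▸ hn)⟩, by rw [sInf_deltaSet_pair (hg ▸ hn), hg]⟩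

/-- If `Δ*(G)` were unbounded, `sSup` would give the junk value `0`, which is not a distance. -/
lemma le_sInf_deltaSet_of_eq_sSup_deltaStar {G₀ : Set G} (hne : (DeltaSet G₀).Nonempty)
    (hmax : sInf (DeltaSet G₀) = sSup (DeltaStar G)) {d : ℕ} (hd : d ∈ DeltaStar G) :
    d ≤ sInf (DeltaSet G₀) := by
  by_cases hbdd : BddAbove (DeltaStar G)
  · exact hmax ▸ le_csSup hbdd hd
  · obtain ⟨B, -, -, hB⟩ := Nat.sInf_mem hne
    have := pos_of_mem_deltaOf hB
    rw [hmax, csSup_of_not_bddAbove hbdd, csSup_empty] at this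
    exact absurd this (lt_irrefl 0)

end MinimalDistance

lemma crossNumber_pair {G : Type*} [AddCommGroup G] (g : G) :
    crossNumber ({g, -g} : Multiset G) = 2 / addOrderOf g := by
  simp only [crossNumber, Multiset.insert_eq_cons, Multiset.map_cons, Multiset.map_singleton,
    Multiset.sum_cons, Multiset.sum_singleton, addOrderOf_neg]
  ring

/-- If `|G| > 2`, `r(G) ≤ exp(G) − 1`, and `G₀ ⊆ G` satisfies
`Δ(G₀) ≠ ∅` and `min Δ(G₀) = max Δ*(G)`, then `G₀` is minimal non-half-factorial and not
an LCN-set iff `G₀ = {g, −g}` for some `g ∈ G` of order `exp(G)`. -/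
theorem stmt_10 {G : Type*} [AddCommGroup G] [Fintype G] (hG : 2 < Fintype.card G)
    (hr : rankG G ≤ AddMonoid.exponent G - 1) (G₀ : Set G)
    (hne : (DeltaSet G₀).Nonempty)
    (hmax : sInf (DeltaSet G₀) = sSup (DeltaStar G)) :
    (IsMinNonHalfFactorial G₀ ∧ ¬ IsLCNSet G₀) ↔
      ∃ g : G, addOrderOf g = AddMonoid.exponent G ∧ G₀ = {g, -g} := by
  have hn := two_lt_exponent (Nat.card_eq_fintype_card (α := G) ▸ hG) hr
  constructor
  · rintro ⟨hmin, hlcn⟩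
    obtain ⟨U, hU, hk⟩ : ∃ U, IsAtomSeq G₀ U ∧ crossNumber U < 1 := by
      simpa [IsLCNSet] using hlcn
    have hlow := le_sInf_deltaSet_of_eq_sSup_deltaStar hne hmax (exponent_sub_two_mem_deltaStar hn)
    have hup := sInf_deltaSet_le_exponent_sub hU hk
    have hlt := scaledCrossNumber_lt_exponent_iff.2 hk
    obtain ⟨u, hu, rfl⟩ :=
      exists_eq_pair_of_scaledCrossNumber_le_two hU.1.2 hU.2.1 hn (by omega)
    have hsub : ({u, -u} : Set G) ⊆ G₀ := by simpa [Set.insert_subset_iff] using hU.1.1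
    exact ⟨u, hu, (hmin.eq_of_subset hsub ⟨_, mem_deltaSet_pair (hu ▸ hn)⟩).symm⟩
  · rintro ⟨g, hg, rfl⟩
    refine ⟨isMinNonHalfFactorial_pair hne, fun hlcn => ?_⟩
    have h0 : g ≠ 0 := by rintro rfl; simp [← hg] at hn
    have := hlcn _ (isAtomSeq_pair (by simp) (by simp) h0)
    rw [crossNumber_pair, hg, le_div_iff₀ (by positivity), one_mul] at this
    exact absurd this (by exact_mod_cast (by omega : ¬ AddMonoid.exponent G ≤ 2))
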